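/- For every t > 0 and x ∈ ℝ, the heat evolution of the Airy function satisfies ∂ₓ²w(t,x) = x·w(t,x) + t·∂ₓw(t,x). -/

import Mathlib

open MeasureTheory Real Filter

noncomputable def w (t x : ℝ) : ℂ :=
  (1 / (2 * Real.pi)) *
    ∫ l : ℝ, Complex.exp (Complex.I * l * x - l ^ 2 * t / 2 + Complex.I * l ^ 3 / 3)

/-- The integrand of the Airy heat evolution. -/
noncomputable def Eexp (t x l : ℝ) : ℂ :=
  Complex.exp (Complex.I * l * x - l ^ 2 * t / 2 + Complex.I * l ^ 3 / 3)

lemma w_eq (t : ℝ) :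
    w t = fun x => (1 / (2 * (Real.pi : ℂ))) * ∫ l : ℝ, Eexp t x l := rfl

lemma norm_Eexp (t x l : ℝ) : ‖Eexp t x l‖ = Real.exp (-(t/2) * l ^ 2) := by
  rw [Eexp, Complex.norm_exp]
  congr 1
  simp [Complex.add_re, Complex.sub_re, Complex.mul_re, Complex.div_re, Complex.I_re,
    Complex.I_im, Complex.ofReal_re, Complex.ofReal_im, Complex.normSq,
    ← Complex.ofReal_pow]
  ring

lemma continuous_Eexp (t x : ℝ) : Continuous fun l : ℝ => Eexp t x l := by
  unfold Eexp; fun_prop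

lemma integrable_bound (t : ℝ) (ht : 0 < t) (n : ℕ) :
    Integrable (fun l : ℝ => |l| ^ n * Real.exp (-(t/2) * l ^ 2)) := by
  have hb : (0:ℝ) < t/2 := by positivity
  have h1 : Integrable (fun l : ℝ => l ^ (2*n) * Real.exp (-(t/2) * l ^ 2)) := by
    refine (integrable_rpow_mul_exp_neg_mul_sq hb
      (lt_of_lt_of_le neg_one_lt_zero (Nat.cast_nonneg _) : (-1:ℝ) < (2*n : ℕ))).congr ?_
    filter_upwards with l
    rw [Real.rpow_natCast]
  have h2 := ((integrable_exp_neg_mul_sq hb).add h1)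
  refine h2.mono' ?_ ?_
  · exact (Continuous.mul (by fun_prop) (by fun_prop)).aestronglyMeasurable
  · filter_upwards with l
    have hexp : (0:ℝ) < Real.exp (-(t/2) * l ^ 2) := Real.exp_pos _
    have h0 : (0:ℝ) ≤ l ^ (2*n) := (even_two_mul n).pow_nonneg l
    have hl : |l| ^ n ≤ 1 + l ^ (2*n) := by
      rcases le_total |l| 1 with h | h
      · have := pow_le_one₀ (abs_nonneg l) h (n := n)
        linarith
      · have h2 : |l| ^ n ≤ |l| ^ (2*n) := pow_le_pow_right₀ h (by omega)
        have h3 : |l| ^ (2*n) = l ^ (2*n) := by rw [← abs_pow, abs_of_nonneg h0]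
        linarith
    rw [Real.norm_eq_abs, abs_of_nonneg (by positivity)]
    simp only [Pi.add_apply]
    nlinarith [mul_le_mul_of_nonneg_right hl hexp.le]

lemma integrable_mul_Eexp (t : ℝ) (ht : 0 < t) (x : ℝ) (n : ℕ) :
    Integrable (fun l : ℝ => (Complex.I * l) ^ n * Eexp t x l) := by
  refine (integrable_bound t ht n).mono' ?_ ?_
  · exact (Continuous.mul (by fun_prop) (continuous_Eexp t x)).aestronglyMeasurable
  · filter_upwards with l
    rw [norm_mul, norm_pow, norm_mul, Complex.norm_I, one_mul, Complex.norm_real,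
      norm_Eexp, Real.norm_eq_abs]

lemma integrable_pow_Eexp (t : ℝ) (ht : 0 < t) (x : ℝ) (n : ℕ) :
    Integrable (fun l : ℝ => (l:ℂ) ^ n * Eexp t x l) := by
  refine (integrable_bound t ht n).mono' ?_ ?_
  · exact (Continuous.mul (by fun_prop) (continuous_Eexp t x)).aestronglyMeasurable
  · filter_upwards with l
    rw [norm_mul, norm_pow, Complex.norm_real, norm_Eexp, Real.norm_eq_abs]

lemma hasDerivAt_Eexp_x (t l x : ℝ) :
    HasDerivAt (fun x : ℝ => Eexp t x l) (Complex.I * l * Eexp t x l) x := by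
  have h : HasDerivAt (fun z : ℂ =>
      Complex.exp (Complex.I * l * z - (l:ℂ) ^ 2 * t / 2 + Complex.I * l ^ 3 / 3))
      (Complex.I * l *
        Complex.exp (Complex.I * l * (x:ℂ) - (l:ℂ) ^ 2 * t / 2 + Complex.I * l ^ 3 / 3))
      (x : ℂ) := by
    have h1 : HasDerivAt (fun z : ℂ =>
        Complex.I * l * z - (l:ℂ) ^ 2 * t / 2 + Complex.I * l ^ 3 / 3)
        (Complex.I * l) (x : ℂ) := by
      simpa using (((hasDerivAt_id (x:ℂ)).const_mul (Complex.I * l)).sub_const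
        ((l:ℂ) ^ 2 * t / 2)).add_const (Complex.I * l ^ 3 / 3)
    simpa [mul_comm] using h1.cexp
  exact h.comp_ofReal

lemma hasDerivAt_integral_Eexp (t : ℝ) (ht : 0 < t) (n : ℕ) (x : ℝ) :
    HasDerivAt (fun x : ℝ => ∫ l : ℝ, (Complex.I * l) ^ n * Eexp t x l)
      (∫ l : ℝ, (Complex.I * l) ^ (n+1) * Eexp t x l) x := by
  have key := hasDerivAt_integral_of_dominated_loc_of_deriv_le (μ := volume)
      (F := fun x (l : ℝ) => (Complex.I * l) ^ n * Eexp t x l)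
      (F' := fun x (l : ℝ) => (Complex.I * l) ^ (n+1) * Eexp t x l)
      (bound := fun l : ℝ => |l| ^ (n+1) * Real.exp (-(t/2) * l ^ 2))
      (x₀ := x) (Metric.ball_mem_nhds x one_pos)
      (by filter_upwards with y using
        (Continuous.mul (by fun_prop) (continuous_Eexp t y)).aestronglyMeasurable)
      (integrable_mul_Eexp t ht x n)
      ((Continuous.mul (by fun_prop) (continuous_Eexp t x)).aestronglyMeasurable)
      ?_ (integrable_bound t ht (n+1)) ?_
  · exact key.2
  · filter_upwards with l
    intro y _
    rw [norm_mul, norm_pow, norm_mul, Complex.norm_I, one_mul, Complex.norm_real,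
      norm_Eexp, Real.norm_eq_abs]
  · filter_upwards with l
    intro y _
    have h := (hasDerivAt_Eexp_x t l y).const_mul ((Complex.I * l) ^ n)
    refine h.congr_deriv ?_
    ring

lemma hasDerivAt_Eexp_l (t x l : ℝ) :
    HasDerivAt (fun l : ℝ => Eexp t x l)
      ((Complex.I * x - l * t + Complex.I * l ^ 2) * Eexp t x l) l := by
  have h1 : HasDerivAt (fun z : ℂ =>
      Complex.I * z * x - z ^ 2 * t / 2 + Complex.I * z ^ 3 / 3)
      (Complex.I * x - (l:ℂ) * t + Complex.I * (l:ℂ) ^ 2) (l : ℂ) := by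
    have := ((((hasDerivAt_id (l:ℂ)).const_mul Complex.I).mul_const (x:ℂ)).sub
      (((hasDerivAt_pow 2 (l:ℂ)).mul_const (t:ℂ)).div_const 2)).add
      (((hasDerivAt_pow 3 (l:ℂ)).const_mul Complex.I).div_const 3)
    refine this.congr_deriv ?_
    push_cast
    ring
  have h3 := h1.cexp.comp_ofReal
  have hm : (Complex.I * (x:ℂ) - (l:ℂ) * t + Complex.I * (l:ℂ) ^ 2) * Eexp t x l
      = Eexp t x l * (Complex.I * (x:ℂ) - (l:ℂ) * t + Complex.I * (l:ℂ) ^ 2) :=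
    mul_comm _ _
  rw [hm]
  exact h3

lemma integrable_derivl_Eexp (t : ℝ) (ht : 0 < t) (x : ℝ) :
    Integrable (fun l : ℝ =>
      (Complex.I * x - l * t + Complex.I * l ^ 2) * Eexp t x l) := by
  have h := (((integrable_pow_Eexp t ht x 0).const_mul (Complex.I * x)).add
    ((integrable_pow_Eexp t ht x 1).const_mul (-(t:ℂ)))).add
    ((integrable_pow_Eexp t ht x 2).const_mul Complex.I)
  refine h.congr ?_
  filter_upwards with l
  simp only [Pi.add_apply, pow_zero, pow_one]
  ring

lemma tendsto_Eexp_atTop (t x : ℝ) (ht : 0 < t) :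
    Tendsto (fun l : ℝ => Eexp t x l) atTop (nhds 0) := by
  rw [tendsto_zero_iff_norm_tendsto_zero]
  simp only [norm_Eexp]
  have hsq : Tendsto (fun l : ℝ => (t/2) * l ^ 2) atTop atTop :=
    (tendsto_pow_atTop two_ne_zero).const_mul_atTop (by positivity)
  have := Real.tendsto_exp_neg_atTop_nhds_zero.comp hsq
  simpa [Function.comp_def, neg_mul] using this

lemma tendsto_Eexp_atBot (t x : ℝ) (ht : 0 < t) :
    Tendsto (fun l : ℝ => Eexp t x l) atBot (nhds 0) := by
  rw [tendsto_zero_iff_norm_tendsto_zero]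
  simp only [norm_Eexp]
  have hsq : Tendsto (fun l : ℝ => (t/2) * l ^ 2) atBot atTop := by
    have h1 : Tendsto (fun l : ℝ => l ^ 2) atBot atTop := by
      have h := (tendsto_pow_atTop (α := ℝ) (n := 2) (by norm_num)).comp
        (tendsto_neg_atBot_atTop (G := ℝ))
      simpa [Function.comp_def, neg_sq] using h
    exact h1.const_mul_atTop (by positivity)
  have := Real.tendsto_exp_neg_atTop_nhds_zero.comp hsq
  simpa [Function.comp_def, neg_mul] using this

lemma integral_derivl_Eexp_eq_zero (t : ℝ) (ht : 0 < t) (x : ℝ) :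
    ∫ l : ℝ, (Complex.I * x - l * t + Complex.I * l ^ 2) * Eexp t x l = 0 := by
  have hint := integrable_derivl_Eexp t ht x
  have hIic := integral_Iic_of_hasDerivAt_of_tendsto' (a := (0:ℝ))
    (f := fun l => Eexp t x l)
    (fun l _ => hasDerivAt_Eexp_l t x l) hint.integrableOn (tendsto_Eexp_atBot t x ht)
  have hIoi := integral_Ioi_of_hasDerivAt_of_tendsto' (a := (0:ℝ))
    (f := fun l => Eexp t x l)
    (fun l _ => hasDerivAt_Eexp_l t x l) hint.integrableOn (tendsto_Eexp_atTop t x ht)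
  rw [← intervalIntegral.integral_Iic_add_Ioi (b := (0:ℝ)) hint.integrableOn
    hint.integrableOn, hIic, hIoi]
  ring

lemma key_identity (t : ℝ) (ht : 0 < t) (x : ℝ) :
    ∫ l : ℝ, (Complex.I * l) ^ 2 * Eexp t x l =
      ((x:ℂ) * ∫ l : ℝ, Eexp t x l) + (t:ℂ) * ∫ l : ℝ, Complex.I * l * Eexp t x l := by
  have hE : Integrable fun l : ℝ => Eexp t x l := by
    simpa using integrable_pow_Eexp t ht x 0
  have h1 : Integrable fun l : ℝ => Complex.I * l * Eexp t x l := by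
    have := integrable_mul_Eexp t ht x 1
    simpa [pow_one] using this
  have hD := integrable_derivl_Eexp t ht x
  have step : ∀ l : ℝ, (Complex.I * l) ^ 2 * Eexp t x l =
      ((x:ℂ) * Eexp t x l + (t:ℂ) * (Complex.I * l * Eexp t x l)) +
        Complex.I * ((Complex.I * x - l * t + Complex.I * l ^ 2) * Eexp t x l) := by
    intro l
    linear_combination (-(x:ℂ) * Eexp t x l) * Complex.I_sq
  rw [show (fun l : ℝ => (Complex.I * l) ^ 2 * Eexp t x l) = fun l : ℝ =>
      ((x:ℂ) * Eexp t x l + (t:ℂ) * (Complex.I * l * Eexp t x l)) +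
        Complex.I * ((Complex.I * x - l * t + Complex.I * l ^ 2) * Eexp t x l)
    from funext step]
  have hA : Integrable (fun l : ℝ =>
      (x:ℂ) * Eexp t x l + (t:ℂ) * (Complex.I * l * Eexp t x l)) :=
    (hE.const_mul _).add (h1.const_mul _)
  have hC : Integrable (fun l : ℝ =>
      Complex.I * ((Complex.I * x - l * t + Complex.I * l ^ 2) * Eexp t x l)) :=
    hD.const_mul _
  rw [integral_add hA hC, integral_add (hE.const_mul _) (h1.const_mul _),
    integral_const_mul, integral_const_mul, integral_const_mul,
    integral_derivl_Eexp_eq_zero t ht x, mul_zero, add_zero]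

/-- The heat evolution of the Airy function satisfies
`∂ₓ²w = x·w + t·∂ₓw`. -/
theorem heat_airy_second_derivative_identity :
    ∀ t > (0 : ℝ), ∀ x : ℝ,
      iteratedDeriv 2 (w t) x = (x : ℂ) * w t x + (t : ℂ) * deriv (w t) x := by
  intro t ht x
  set c : ℂ := 1 / (2 * (Real.pi : ℂ)) with hc
  have hw1 : ∀ y : ℝ, HasDerivAt (w t) (c * ∫ l : ℝ, Complex.I * l * Eexp t y l) y := by
    intro y
    have h := (hasDerivAt_integral_Eexp t ht 0 y).const_mul c
    simp only [pow_zero, one_mul, zero_add, pow_one] at h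
    rw [w_eq t]
    exact h
  have hderiv : deriv (w t) = fun y : ℝ => c * ∫ l : ℝ, Complex.I * l * Eexp t y l :=
    funext fun y => (hw1 y).deriv
  have hw2 : HasDerivAt (fun y : ℝ => c * ∫ l : ℝ, Complex.I * l * Eexp t y l)
      (c * ∫ l : ℝ, (Complex.I * l) ^ 2 * Eexp t x l) x := by
    have h := (hasDerivAt_integral_Eexp t ht 1 x).const_mul c
    simpa [pow_one] using h
  have h2 : iteratedDeriv 2 (w t) x = c * ∫ l : ℝ, (Complex.I * l) ^ 2 * Eexp t x l := by
    rw [iteratedDeriv_succ, iteratedDeriv_one, hderiv]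
    exact hw2.deriv
  rw [h2, key_identity t ht x, hderiv, w_eq t]
  ring
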